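/- Recursive structure of fixed points of γ: let w = u·a·v·b·Sym(u)·b be an element of F_n, where u·a is the principal prefix of w, and suppose v ≠ λ. Then v is symmetric, i.e., Sym(v) = v, and the word v̄·b (the complement of v, which equals the mirror of v since v is symmetric, followed by b) belongs to F_γ. -/

import Mathlib

/-- The two-letter alphabet {a, b}. -/
inductive Letter : Type
  | a : Letter
  | b : Letter
deriving DecidableEq, BEq, Repr

/-- Words over the alphabet {a, b}. -/
abbrev Word := List Letter

/-- δ(w) = |w|_a − |w|_b. -/
def delta (w : Word) : ℤ := (w.count Letter.a : ℤ) - (w.count Letter.b : ℤ)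

/-- A Dyck word: δ(w) = 0 and δ(p) ≥ 0 for every prefix p of w. -/
def IsDyck (w : Word) : Prop := delta w = 0 ∧ ∀ p : Word, p <+: w → 0 ≤ delta p

/-- Membership in D_n: w = d·b with d a Dyck word of length 2n. -/
def InD (n : ℕ) (w : Word) : Prop :=
  ∃ d : Word, IsDyck d ∧ d.length = 2 * n ∧ w = d ++ [Letter.b]

/-- Exchanging the letters a and b. -/
def Letter.flip : Letter → Letter
  | .a => .b
  | .b => .a

/-- The complement w̄ of a word w. -/
def comp (w : Word) : Word := w.map Letter.flip

/-- Sym(w): the complement of the mirror (reversal) of w. -/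
def sym (w : Word) : Word := comp w.reverse

/-- A palindrome: a word equal to its mirror. -/
def Palindrome (w : Word) : Prop := w.reverse = w

/-- w' is a conjugate of w: w = u·v and w' = v·u. -/
def Conj (w w' : Word) : Prop := ∃ u v : Word, w = u ++ v ∧ w' = v ++ u

/-- u is the principal prefix of w: the shortest prefix of w with δ(u) maximal. -/
def IsPrincipalPrefix (u w : Word) : Prop :=
  u <+: w ∧ (∀ p : Word, p <+: w → delta p ≤ delta u) ∧
    (∀ p : Word, p <+: w → delta p = delta u → u.length ≤ p.length)

/-- The graph of the map γ: writing w = u·v·b with u the principal prefix of w,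
    γ(w) = v̄·b·ū. -/
def GammaRel (w w' : Word) : Prop :=
  ∃ u v : Word, IsPrincipalPrefix u w ∧ w = u ++ v ++ [Letter.b] ∧
    w' = comp v ++ [Letter.b] ++ comp u

/-- F_n: the fixed points of γ in D_n. -/
def InF (n : ℕ) (w : Word) : Prop := InD n w ∧ GammaRel w w

/-- F_γ = ⋃_{n ≥ 1} F_n. -/
def InFgamma (w : Word) : Prop := ∃ n : ℕ, 1 ≤ n ∧ InF n w

/-- x^y: concatenation of the word x with itself y times. -/
def wpow (x : Word) : ℕ → Word
  | 0 => []
  | k + 1 => x ++ wpow x k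

/-!
Comparing `w` with `γ(w)` shows that `u` is a palindrome and `u·a·v = v̄·a·u`. In this equation
every letter of `v` is the flip of the letter `|u| + 1` places earlier in `u·a·v`, so `v` is
determined by `u` and `|v|`; reversing the equation shows that `Sym(v)` solves it as well, hence
`Sym(v) = v`.

The equation is solved by a Euclidean descent: if `|u| > |v|` then `u = v̄·a·t` with
`t·a·v = v̄·a·t` and `t·a` still principal in `t·a·v`; once `|u| < |v|` we have `v̄ = u·a·s` and
`v = s·a·u`, so `u·a` is the principal prefix of `v̄·b` and `γ(v̄·b) = s̄·b·ū·b = v̄·b`. That `v̄` is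
a Dyck word comes from `u·a` being principal in `u·a·v`.
-/

open Letter

instance : LawfulBEq Letter where
  rfl {x} := by cases x <;> rfl
  eq_of_beq {x y} := by cases x <;> cases y <;> simp +decide

@[simp] lemma Letter.flip_a : a.flip = b := rfl

@[simp] lemma Letter.flip_b : b.flip = a := rfl

@[simp] lemma Letter.flip_flip (x : Letter) : x.flip.flip = x := by cases x <;> rfl

@[simp] lemma comp_nil : comp [] = [] := rfl

@[simp] lemma comp_cons (x : Letter) (w : Word) : comp (x :: w) = x.flip :: comp w := rfl

@[simp] lemma comp_append (x y : Word) : comp (x ++ y) = comp x ++ comp y := List.map_append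

@[simp] lemma comp_comp (w : Word) : comp (comp w) = w := by simp [comp, Function.comp_def]

@[simp] lemma length_comp (w : Word) : (comp w).length = w.length := List.length_map _

lemma comp_take (w : Word) (k : ℕ) : comp (w.take k) = (comp w).take k := List.map_take

lemma comp_reverse (w : Word) : comp w.reverse = (comp w).reverse := List.map_reverse

lemma comp_injective : Function.Injective comp :=
  Function.LeftInverse.injective comp_comp

@[simp] lemma comp_sym (w : Word) : comp (sym w) = w.reverse := comp_comp _

lemma eq_nil_of_comp_eq_self {v : Word} (h : comp v = v) : v = [] := by
  cases v with
  | nil => rfl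
  | cons x t => cases x <;> simp at h

lemma delta_append (x y : Word) : delta (x ++ y) = delta x + delta y := by
  simp only [delta, List.count_append]; push_cast; ring

@[simp] lemma delta_b : delta [b] = -1 := rfl

lemma delta_comp (w : Word) : delta (comp w) = -delta w := by
  induction w with
  | nil => rfl
  | cons x t ih =>
    simp only [delta, comp_cons, List.count_cons] at ih ⊢
    cases x <;> simp <;> omega

lemma length_eq_count_add_count (w : Word) : w.length = w.count a + w.count b := by
  induction w with
  | nil => rfl
  | cons x t ih => cases x <;> simp [ih] <;> omega

lemma IsDyck.length_eq {d : Word} (hd : IsDyck d) : d.length = 2 * d.count a := by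
  have := hd.1
  simp only [delta] at this
  rw [length_eq_count_add_count]
  omega

lemma isDyck_comp_of_isPrincipalPrefix {P v : Word} (hP : IsPrincipalPrefix P (P ++ v))
    (hv : delta v = 0) : IsDyck (comp v) := by
  refine ⟨by rw [delta_comp, hv, neg_zero], fun p hp => ?_⟩
  have hpv : comp p <+: v := comp_comp v ▸ hp.map Letter.flip
  have := hP.2.1 (P ++ comp p) ((List.prefix_append_right_inj P).2 hpv)
  rw [delta_append, delta_comp] at this
  omega

lemma inFgamma_of_isDyck {d : Word} (hd : IsDyck d) (hne : d ≠ [])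
    (hγ : GammaRel (d ++ [b]) (d ++ [b])) : InFgamma (d ++ [b]) := by
  have hlen := hd.length_eq
  have hpos := List.length_pos_iff.2 hne
  exact ⟨d.count a, by omega, ⟨d, hd, hlen, rfl⟩, hγ⟩

namespace IsPrincipalPrefix

variable {P Q w x : Word}

lemma unique (hP : IsPrincipalPrefix P w) (hQ : IsPrincipalPrefix Q w) : P = Q := by
  have hδ : delta P = delta Q := le_antisymm (hQ.2.1 P hP.1) (hP.2.1 Q hQ.1)
  have hl : P.length ≤ Q.length := hP.2.2 Q hQ.1 hδ.symm
  exact (List.prefix_of_prefix_length_le hP.1 hQ.1 hl).eq_of_length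
    (le_antisymm hl (hQ.2.2 P hP.1 hδ))

lemma of_prefix (hP : IsPrincipalPrefix P w) (hPx : P <+: x) (hxw : x <+: w) :
    IsPrincipalPrefix P x :=
  ⟨hPx, fun p hp => hP.2.1 p (hp.trans hxw), fun p hp => hP.2.2 p (hp.trans hxw)⟩

lemma append_b (hP : IsPrincipalPrefix P x) : IsPrincipalPrefix P (x ++ [b]) := by
  have hlt : delta (x ++ [b]) < delta P := by
    have := hP.2.1 x List.prefix_rfl
    rw [delta_append, delta_b]
    omega
  refine ⟨hP.1.trans (List.prefix_append x [b]), fun p hp => ?_, fun p hp hδ => ?_⟩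
  · rcases List.prefix_concat_iff.1 hp with rfl | hp
    · exact hlt.le
    · exact hP.2.1 p hp
  · rcases List.prefix_concat_iff.1 hp with rfl | hp
    · exact absurd hδ hlt.ne
    · exact hP.2.2 p hp hδ

lemma of_append_left (hP : IsPrincipalPrefix (x ++ P) (x ++ w)) : IsPrincipalPrefix P w := by
  refine ⟨(List.prefix_append_right_inj x).1 hP.1, fun p hp => ?_, fun p hp hδ => ?_⟩
  · have := hP.2.1 (x ++ p) ((List.prefix_append_right_inj x).2 hp)
    rw [delta_append, delta_append] at this
    omega
  · have := hP.2.2 (x ++ p) ((List.prefix_append_right_inj x).2 hp)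
      (by rw [delta_append, delta_append, hδ])
    simpa using this

end IsPrincipalPrefix

lemma take_eq_comp_take_of_comp_prefix {p x : Word} (h : comp x <+: p ++ x) {k : ℕ}
    (hk : k ≤ x.length) : x.take k = comp ((p ++ x).take k) := by
  have hx : comp x = (p ++ x).take x.length := by simpa using List.prefix_iff_eq_take.1 h
  rw [← comp_comp (x.take k), comp_take, hx, List.take_take, min_eq_left hk]

lemma eq_of_comp_prefix_append {p v v' : Word} (hp : p ≠ []) (hlen : v.length = v'.length)
    (h : comp v <+: p ++ v) (h' : comp v' <+: p ++ v') : v = v' := by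
  have hp_pos := List.length_pos_iff.2 hp
  have htake : ∀ k ≤ v.length, v.take k = v'.take k := by
    intro k
    induction k using Nat.strong_induction_on with
    | _ k ih =>
      intro hk
      rw [take_eq_comp_take_of_comp_prefix h hk,
        take_eq_comp_take_of_comp_prefix h' (hlen ▸ hk), List.take_append, List.take_append]
      rcases Nat.eq_zero_or_pos k with rfl | hk0
      · simp
      · rw [ih (k - p.length) (by omega) (by omega)]
  have := htake v.length le_rfl
  rwa [List.take_length, hlen, List.take_length] at this

lemma sym_eq_self_of_append_eq {u v : Word} (hu : u.reverse = u)
    (h : u ++ [a] ++ v = comp v ++ [a] ++ u) : sym v = v := by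
  have hrev : v.reverse ++ [a] ++ u = u ++ [a] ++ sym v := by
    simpa [sym, comp_reverse, hu] using congrArg List.reverse h
  refine eq_of_comp_prefix_append (p := u ++ [a]) (by simp) (by simp [sym]) ?_ ?_
  · exact ⟨[a] ++ u, by rw [comp_sym, ← hrev, List.append_assoc]⟩
  · exact ⟨[a] ++ u, by rw [h, List.append_assoc]⟩

lemma delta_eq_zero_of_append_eq {u v : Word} (h : u ++ [a] ++ v = comp v ++ [a] ++ u) :
    delta v = 0 := by
  have := congrArg delta h
  simp only [delta_append, delta_comp] at this
  omega

lemma append_eq_comp_cases {u v : Word} (h : u ++ [a] ++ v = comp v ++ [a] ++ u)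
    (hv : v ≠ []) :
    (∃ s, comp v = u ++ [a] ++ s ∧ v = s ++ [a] ++ u) ∨
      ∃ t, u = comp v ++ [a] ++ t ∧ t ++ [a] ++ v = comp v ++ [a] ++ t := by
  simp only [List.append_assoc] at h
  rcases List.append_eq_append_iff.1 h with ⟨s, hs, hv'⟩ | ⟨t, ht, hu⟩
  · rcases s with _ | ⟨x, s⟩
    · simp at hs hv'
      exact absurd (eq_nil_of_comp_eq_self (hs.trans hv'.symm)) hv
    · simp only [List.cons_append, List.cons.injEq] at hv'
      obtain ⟨rfl, rfl⟩ := hv'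
      exact Or.inl ⟨s, by simpa using hs, by simp⟩
  · rcases t with _ | ⟨x, t⟩
    · simp at ht hu
      exact absurd (eq_nil_of_comp_eq_self (ht.symm.trans hu)) hv
    · simp only [List.cons_append, List.cons.injEq] at hu
      obtain ⟨rfl, rfl⟩ := hu
      exact Or.inr ⟨t, by simpa using ht, by simpa using ht⟩

lemma gammaRel_comp_append_b {u v : Word} (h : u ++ [a] ++ v = comp v ++ [a] ++ u)
    (hP : IsPrincipalPrefix (u ++ [a]) (u ++ [a] ++ v)) (hv : v ≠ []) :
    GammaRel (comp v ++ [b]) (comp v ++ [b]) := by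
  induction hn : u.length using Nat.strong_induction_on generalizing u with
  | _ n ih =>
    rcases append_eq_comp_cases h hv with ⟨s, hs, hvs⟩ | ⟨t, rfl, ht⟩
    · have hPv : IsPrincipalPrefix (u ++ [a]) (comp v) :=
        hP.of_prefix ⟨s, hs.symm⟩ ⟨[a] ++ u, by rw [h, List.append_assoc]⟩
      refine ⟨u ++ [a], s, hPv.append_b, by rw [hs], ?_⟩
      rw [hvs]
      simp
    · refine ih t.length ?_ ht ?_ rfl
      · simp [← hn]
        omega
      · exact IsPrincipalPrefix.of_append_left (x := comp v ++ [a]) (by simpa using hP)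

lemma reverse_eq_and_append_eq_of_fixed {u v : Word}
    (h : u ++ [a] ++ v ++ [b] ++ sym u ++ [b] =
      comp v ++ [a] ++ u.reverse ++ [b] ++ comp u ++ [b]) :
    u.reverse = u ∧ u ++ [a] ++ v = comp v ++ [a] ++ u := by
  obtain ⟨h₁, -⟩ := List.append_inj' h rfl
  obtain ⟨h₂, h₃⟩ := List.append_inj' h₁ (by simp [sym])
  have hu : u.reverse = u := comp_injective h₃
  rw [hu] at h₂
  exact ⟨hu, (List.append_inj' h₂ rfl).1⟩

/-- Recursive structure: for w = u·a·v·b·Sym(u)·b ∈ F_n with u·a its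
    principal prefix and v ≠ λ, v is symmetric and v̄·b ∈ F_γ. -/
theorem recursive_structure (n : ℕ) (w u v : Word) (hw : InF n w)
    (hdec : w = u ++ [Letter.a] ++ v ++ [Letter.b] ++ sym u ++ [Letter.b])
    (hpp : IsPrincipalPrefix (u ++ [Letter.a]) w)
    (hv : v ≠ []) :
    sym v = v ∧ InFgamma (comp v ++ [Letter.b]) := by
  obtain ⟨-, P, Q, hP, hsplit, hfix⟩ := hw
  obtain rfl : P = u ++ [a] := hP.unique hpp
  obtain rfl : Q = v ++ [b] ++ sym u := by
    rw [hdec] at hsplit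
    exact List.append_cancel_right (by simpa using hsplit.symm)
  obtain ⟨hu, h⟩ := reverse_eq_and_append_eq_of_fixed (hdec.symm.trans (by simpa using hfix))
  have hPv : IsPrincipalPrefix (u ++ [a]) (u ++ [a] ++ v) :=
    hpp.of_prefix ⟨v, rfl⟩ ⟨[b] ++ sym u ++ [b], by simp [hdec]⟩
  refine ⟨sym_eq_self_of_append_eq hu h, inFgamma_of_isDyck ?_ ?_ ?_⟩
  · exact isDyck_comp_of_isPrincipalPrefix hPv (delta_eq_zero_of_append_eq h)
  · simpa [comp] using hv
  · exact gammaRel_comp_append_b h hPv hv
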